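/- For every symmetric traceless 3×3 matrix Q all of whose eigenvalues lie in the open interval (-1/3, 2/3), the supremum over symmetric traceless B of B:Q − log∫_{S²} e^{m·Bm} dm is finite. -/

import Mathlib

open MeasureTheory

noncomputable def sphereMeasure :
    Measure (Metric.sphere (0 : EuclideanSpace ℝ (Fin 3)) 1) :=
  (volume : Measure (EuclideanSpace ℝ (Fin 3))).toSphere

noncomputable def quadForm (B : Matrix (Fin 3) (Fin 3) ℝ)
    (m : EuclideanSpace ℝ (Fin 3)) : ℝ :=
  ∑ i, ∑ j, B i j * m i * m j

noncomputable def omegaFn (B : Matrix (Fin 3) (Fin 3) ℝ) : ℝ :=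
  Real.log (∫ m : Metric.sphere (0 : EuclideanSpace ℝ (Fin 3)) 1,
    Real.exp (quadForm B m) ∂sphereMeasure)

/-!
Diagonalise `B = ∑ βₖ eₖ eₖᵀ` and put `qₖ = eₖ · Q eₖ`, so that `B : Q = ∑ βₖ qₖ`. Since
`∑ βₖ = tr B = 0` and `∑ qₖ = tr Q = 0`, this equals `∑ βₖ (qₖ + 1/3)`, an average of the `βₖ` with
weights `qₖ + 1/3 ≥ δ := λ_min(Q) + 1/3 > 0`; hence `B : Q ≤ β_max - (β_max - β_min) δ`.
Conversely `m · B m ≥ β_max - (β_max - β_min) |m - e_max|²` on the unit sphere, so the integrand of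
`ω(B)` is at least `exp (β_max - (β_max - β_min) δ)` on the cap of radius `√δ` around `e_max`,
whose measure is bounded below by a constant `c > 0` independent of `B`. Thus
`B : Q - ω(B) ≤ -log c`.
-/

open Metric
open scoped RealInnerProductSpace InnerProductSpace

namespace LinearMap

theorem trace_comp_eq_sum_eigenvalues_mul_inner {𝕜 E ι : Type*} [RCLike 𝕜]
    [NormedAddCommGroup E] [InnerProductSpace 𝕜 E] [Fintype ι] (S T : E →ₗ[𝕜] E)
    (b : OrthonormalBasis ι 𝕜 E) {μ : ι → 𝕜} (hb : ∀ i, T (b i) = μ i • b i) :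
    trace 𝕜 E (S ∘ₗ T) = ∑ i, μ i * ⟪b i, S (b i)⟫_𝕜 := by
  rw [trace_eq_sum_inner _ b]
  simp only [comp_apply, hb, map_smul, inner_smul_right]

namespace IsSymmetric

variable {E ι : Type*} [NormedAddCommGroup E] [InnerProductSpace ℝ E] [Fintype ι]
  {T : E →ₗ[ℝ] E}

theorem inner_map_self_eq_sum_eigenvalues (hT : T.IsSymmetric) (b : OrthonormalBasis ι ℝ E)
    {μ : ι → ℝ} (hb : ∀ i, T (b i) = μ i • b i) (x : E) :
    ⟪T x, x⟫ = ∑ i, μ i * ⟪b i, x⟫ ^ 2 := by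
  rw [← b.sum_inner_mul_inner]
  refine Finset.sum_congr rfl fun i _ => ?_
  rw [hT, hb, real_inner_smul_right, real_inner_comm x]
  ring

theorem mul_norm_sq_le_inner_map_self (hT : T.IsSymmetric) (b : OrthonormalBasis ι ℝ E)
    {μ : ι → ℝ} (hb : ∀ i, T (b i) = μ i • b i) {c : ℝ} (hc : ∀ i, c ≤ μ i) (x : E) :
    c * ‖x‖ ^ 2 ≤ ⟪T x, x⟫ := by
  rw [hT.inner_map_self_eq_sum_eigenvalues b hb, ← b.sum_sq_inner_right, Finset.mul_sum]
  exact Finset.sum_le_sum fun i _ => mul_le_mul_of_nonneg_right (hc i) (sq_nonneg _)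

theorem sub_mul_norm_sub_sq_le_inner_map_self (hT : T.IsSymmetric) {a β : ℝ} {v : E}
    (hv : T v = β • v) (ha : ∀ y, a * ‖y‖ ^ 2 ≤ ⟪T y, y⟫) (x : E) :
    β * ‖x‖ ^ 2 - (β - a) * ‖x - v‖ ^ 2 ≤ ⟪T x, x⟫ := by
  have h := ha (x - v)
  have hxv : ⟪T x, v⟫ = β * ⟪x, v⟫ := by rw [hT, hv, real_inner_smul_right]
  rw [map_sub, inner_sub_left, inner_sub_right, inner_sub_right, hv, hxv, real_inner_smul_left,
    real_inner_smul_left, real_inner_self_eq_norm_sq, real_inner_comm x v] at h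
  rw [norm_sub_sq_real] at h ⊢
  linear_combination h

end IsSymmetric
end LinearMap

theorem sum_mul_le_of_forall_le_weight {ι : Type*} [Fintype ι] {β w : ι → ℝ} {M δ : ℝ}
    (hM : ∀ k, β k ≤ M) (hw : ∀ k, δ ≤ w k) (hδ : 0 ≤ δ) (hw1 : ∑ k, w k = 1) (j : ι) :
    ∑ k, β k * w k ≤ M - (M - β j) * δ := by
  have hsum : M - ∑ k, β k * w k = ∑ k, (M - β k) * w k := by
    simp only [sub_mul, Finset.sum_sub_distrib, ← Finset.mul_sum, hw1, mul_one]
  have hj : (M - β j) * w j ≤ ∑ k, (M - β k) * w k :=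
    Finset.single_le_sum (f := fun k => (M - β k) * w k)
      (fun k _ => mul_nonneg (sub_nonneg.2 (hM k)) (hδ.trans (hw k))) (Finset.mem_univ j)
  linarith [mul_le_mul_of_nonneg_left (hw j) (sub_nonneg.2 (hM j))]

theorem add_log_measureReal_le_log_integral_exp {X : Type*} [MeasurableSpace X] {μ : Measure X}
    [IsFiniteMeasure μ] {f : X → ℝ} (hf : Integrable (fun x => Real.exp (f x)) μ) {s : Set X}
    (hs : 0 < μ.real s) {a : ℝ} (ha : ∀ x ∈ s, a ≤ f x) :
    a + Real.log (μ.real s) ≤ Real.log (∫ x, Real.exp (f x) ∂μ) := by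
  have hsub : s ⊆ {x | Real.exp a ≤ Real.exp (f x)} := fun x hx => Real.exp_le_exp.2 (ha x hx)
  have hmarkov : Real.exp a * μ.real s ≤ ∫ x, Real.exp (f x) ∂μ :=
    (mul_le_mul_of_nonneg_left (measureReal_mono hsub) (Real.exp_pos a).le).trans
      (mul_meas_ge_le_integral_of_nonneg (.of_forall fun x => (Real.exp_pos _).le) hf _)
  rw [← Real.log_exp a, ← Real.log_mul (Real.exp_pos a).ne' hs.ne']
  exact Real.log_le_log (by positivity) hmarkov

namespace Matrix

variable {n ι : Type*} [Fintype n] [Fintype ι]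

theorem sum_sum_mul_eq_trace_mul_transpose {R : Type*} [CommSemiring R] (B Q : Matrix n n R) :
    ∑ i, ∑ j, B i j * Q i j = trace (B * Qᵀ) := by
  simp [trace, mul_apply]

theorem trace_toEuclideanLin [DecidableEq n] (A : Matrix n n ℝ) :
    LinearMap.trace ℝ _ (toEuclideanLin A) = A.trace :=
  A.trace_toLin_eq (EuclideanSpace.basisFun n ℝ).toBasis

theorem trace_eq_sum_inner_toEuclideanLin [DecidableEq n] (A : Matrix n n ℝ)
    (b : OrthonormalBasis ι ℝ (EuclideanSpace ℝ n)) :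
    A.trace = ∑ i, ⟪b i, toEuclideanLin A (b i)⟫ := by
  rw [← trace_toEuclideanLin, LinearMap.trace_eq_sum_inner _ b]

namespace IsHermitian

variable [DecidableEq n] {A B Q : Matrix n n ℝ}

theorem toEuclideanLin_eigenvectorBasis (hA : A.IsHermitian) (k : n) :
    toEuclideanLin A (hA.eigenvectorBasis k) = hA.eigenvalues k • hA.eigenvectorBasis k := by
  ext i
  simp [toLpLin_apply, hA.mulVec_eigenvectorBasis]

theorem mul_norm_sq_le_inner_toEuclideanLin (hA : A.IsHermitian) {c : ℝ}
    (hc : ∀ i, c ≤ hA.eigenvalues i) (x : EuclideanSpace ℝ n) :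
    c * ‖x‖ ^ 2 ≤ ⟪toEuclideanLin A x, x⟫ :=
  (isSymmetric_toEuclideanLin_iff.2 hA).mul_norm_sq_le_inner_map_self _
    hA.toEuclideanLin_eigenvectorBasis hc x

theorem sub_mul_norm_sub_sq_le_inner_toEuclideanLin (hA : A.IsHermitian) {c : ℝ}
    (hc : ∀ i, c ≤ hA.eigenvalues i) (k : n) (x : EuclideanSpace ℝ n) :
    hA.eigenvalues k * ‖x‖ ^ 2 - (hA.eigenvalues k - c) * ‖x - hA.eigenvectorBasis k‖ ^ 2
      ≤ ⟪toEuclideanLin A x, x⟫ :=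
  (isSymmetric_toEuclideanLin_iff.2 hA).sub_mul_norm_sub_sq_le_inner_map_self
    (hA.toEuclideanLin_eigenvectorBasis k) (hA.mul_norm_sq_le_inner_toEuclideanLin hc) x

theorem trace_mul_eq_sum_eigenvalues_mul_inner (hB : B.IsHermitian) (Q : Matrix n n ℝ) :
    (Q * B).trace = ∑ k, hB.eigenvalues k *
      ⟪hB.eigenvectorBasis k, toEuclideanLin Q (hB.eigenvectorBasis k)⟫ := by
  rw [← trace_toEuclideanLin, toLpLin_mul_same]
  exact LinearMap.trace_comp_eq_sum_eigenvalues_mul_inner _ _ _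
    hB.toEuclideanLin_eigenvectorBasis

theorem sum_sum_mul_le_sub_mul (hB : B.IsHermitian) (hBtr : B.trace = 0) (hQ : Q.IsHermitian)
    (hQtr : Q.trace = 0) {δ : ℝ} (hδ : 0 ≤ δ)
    (hQeig : ∀ i, δ - (Fintype.card n : ℝ)⁻¹ ≤ hQ.eigenvalues i) {M : ℝ}
    (hM : ∀ k, hB.eigenvalues k ≤ M) (l : n) :
    ∑ i, ∑ j, B i j * Q i j ≤ M - (M - hB.eigenvalues l) * δ := by
  set e := hB.eigenvectorBasis
  set q := fun k => ⟪e k, toEuclideanLin Q (e k)⟫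
  have hq : ∀ k, δ - (Fintype.card n : ℝ)⁻¹ ≤ q k := fun k => by
    simpa [q, real_inner_comm, e.norm_eq_one] using
      hQ.mul_norm_sq_le_inner_toEuclideanLin hQeig (e k)
  have hq_sum : ∑ k, q k = 0 := by rw [← Q.trace_eq_sum_inner_toEuclideanLin e, hQtr]
  have hβ_sum : ∑ k, hB.eigenvalues k = 0 := by
    simpa [hBtr] using hB.trace_eq_sum_eigenvalues.symm
  have hpair :
      ∑ i, ∑ j, B i j * Q i j = ∑ k, hB.eigenvalues k * (q k + (Fintype.card n : ℝ)⁻¹) := by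
    rw [sum_sum_mul_eq_trace_mul_transpose, (isHermitian_iff_isSymm.1 hQ).eq, trace_mul_comm,
      hB.trace_mul_eq_sum_eigenvalues_mul_inner]
    simp only [mul_add, Finset.sum_add_distrib, ← Finset.sum_mul, hβ_sum, zero_mul, add_zero]
    rfl
  have hw : ∑ k, (q k + (Fintype.card n : ℝ)⁻¹) = 1 := by
    have : Nonempty n := ⟨l⟩
    simp [Finset.sum_add_distrib, hq_sum]
  rw [hpair]
  exact sum_mul_le_of_forall_le_weight hM (fun k => by linarith [hq k]) hδ hw l

end IsHermitian
end Matrix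

local notation "E3" => EuclideanSpace ℝ (Fin 3)
local notation "S2" => Metric.sphere (0 : EuclideanSpace ℝ (Fin 3)) 1

instance : IsFiniteMeasure sphereMeasure := by unfold sphereMeasure; infer_instance

theorem quadForm_eq_inner (B : Matrix (Fin 3) (Fin 3) ℝ) (m : E3) :
    quadForm B m = ⟪Matrix.toEuclideanLin B m, m⟫ := by
  simp only [quadForm, PiLp.inner_apply, Matrix.toLpLin_apply, Matrix.mulVec, dotProduct,
    RCLike.inner_apply, conj_trivial, Finset.mul_sum]
  refine Finset.sum_congr rfl fun i _ => Finset.sum_congr rfl fun j _ => ?_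
  ring

theorem continuous_quadForm (B : Matrix (Fin 3) (Fin 3) ℝ) : Continuous (quadForm B) := by
  unfold quadForm; fun_prop

theorem add_log_measureReal_le_omegaFn (B : Matrix (Fin 3) (Fin 3) ℝ) {s : Set S2}
    (hs : 0 < sphereMeasure.real s) {a : ℝ} (ha : ∀ m ∈ s, a ≤ quadForm B m) :
    a + Real.log (sphereMeasure.real s) ≤ omegaFn B := by
  have hcont : Continuous fun m : S2 => Real.exp (quadForm B m) :=
    Real.continuous_exp.comp ((continuous_quadForm B).comp continuous_subtype_val)
  exact add_log_measureReal_le_log_integral_exp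
    (hcont.integrable_of_hasCompactSupport (HasCompactSupport.of_compactSpace _)) hs ha

theorem Matrix.IsHermitian.sub_mul_le_quadForm {B : Matrix (Fin 3) (Fin 3) ℝ}
    (hB : B.IsHermitian)
    {kM km : Fin 3} (hkM : ∀ k, hB.eigenvalues k ≤ hB.eigenvalues kM)
    (hkm : ∀ k, hB.eigenvalues km ≤ hB.eigenvalues k) {δ : ℝ} {m : E3} (hm : ‖m‖ = 1)
    (hmv : dist m (hB.eigenvectorBasis kM) < √δ) :
    hB.eigenvalues kM - (hB.eigenvalues kM - hB.eigenvalues km) * δ ≤ quadForm B m := by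
  have hcap := hB.sub_mul_norm_sub_sq_le_inner_toEuclideanLin hkm kM m
  have hdist : ‖m - hB.eigenvectorBasis kM‖ ^ 2 ≤ δ := by
    rw [← dist_eq_norm]
    exact ((Real.lt_sqrt dist_nonneg).1 hmv).le
  rw [hm, one_pow, mul_one] at hcap
  rw [quadForm_eq_inner]
  linarith [mul_le_mul_of_nonneg_left hdist (sub_nonneg.2 (hkM km))]

theorem sup_legendre_finite (Q : Matrix (Fin 3) (Fin 3) ℝ)
    (hQ : Q.IsHermitian) (htr : Q.trace = 0)
    (heig : ∀ i, hQ.eigenvalues i ∈ Set.Ioo (-(1 / 3) : ℝ) (2 / 3)) :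
    ∃ C : ℝ, ∀ B : Matrix (Fin 3) (Fin 3) ℝ, B.IsSymm → B.trace = 0 →
      (∑ i, ∑ j, B i j * Q i j) - omegaFn B ≤ C := by
  obtain ⟨i₀, hi₀⟩ := Finite.exists_min hQ.eigenvalues
  obtain ⟨δ, hδ, hQδ⟩ : ∃ δ > 0, ∀ i, δ - 1 / 3 ≤ hQ.eigenvalues i :=
    ⟨hQ.eigenvalues i₀ + 1 / 3, by linarith [(heig i₀).1], fun i => by linarith [hi₀ i]⟩
  set c := (Measure.toSphereBallBound (Module.finrank ℝ E3) √δ : ℝ) *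
    volume.real (ball (0 : E3) 1)
  have hc : 0 < c := mul_pos (Measure.toSphereBallBound_pos _ _)
    (ENNReal.toReal_pos (measure_ball_pos volume _ one_pos).ne' measure_ball_lt_top.ne)
  refine ⟨-Real.log c, fun B hBs hBtr => ?_⟩
  have hB : B.IsHermitian := Matrix.isHermitian_iff_isSymm.2 hBs
  obtain ⟨kM, hkM⟩ := Finite.exists_max hB.eigenvalues
  obtain ⟨km, hkm⟩ := Finite.exists_min hB.eigenvalues
  set v : S2 := ⟨hB.eigenvectorBasis kM, by simp [hB.eigenvectorBasis.norm_eq_one]⟩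
  have hcap : c ≤ sphereMeasure.real (ball v √δ) :=
    Measure.toSphereBallBound_mul_measureReal_unitBall_le_toSphere_ball volume
      (Real.sqrt_pos.2 hδ) v
  have hpair := hB.sum_sum_mul_le_sub_mul hBtr hQ htr hδ.le
    (fun i => by norm_num; linarith [hQδ i]) hkM km
  have homega := add_log_measureReal_le_omegaFn B (hc.trans_le hcap)
    (fun m hm => hB.sub_mul_le_quadForm hkM hkm (by simp) hm)
  have := Real.log_le_log hc hcap
  linarith
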